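/- Let G be a finite simple graph on n vertices, let P = {E_i : i ∈ I} be an edge clique partition of G, for each vertex v let m_v = m_v(P) be its clique degree, and let m = m_G(P) be the maximum clique degree. Then −m is an eigenvalue of the adjacency matrix of G if and only if there exists a nonzero real vector X = (x_v)_{v ∈ V(G)} such that (a) for every i ∈ I, Σ_{v ∈ V(G[E_i])} x_v = 0, and (b) x_v = 0 for every vertex v with m_v ≠ m. Moreover, in that case every such X is an eigenvector of the adjacency matrix associated with the eigenvalue −m, and conversely every eigenvector for −m satisfies (a) and (b). -/

import Mathlib

/-- An edge clique partition of `G`, presented as a finite family `P` of cliques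
(each with at least two vertices, so that its edge set is nonempty) such that
every edge of `G` lies inside exactly one clique of `P`. -/
def IsEdgeCliquePartition {V : Type*} (G : SimpleGraph V) (P : Finset (Finset V)) : Prop :=
  (∀ c ∈ P, G.IsClique (c : Set V) ∧ 2 ≤ c.card) ∧
    ∀ e ∈ G.edgeSet, ∃! c, c ∈ P ∧ ∀ v, v ∈ e → v ∈ c

/-- The clique degree of a vertex `v` relative to an edge clique partition `P`:
the number of cliques of `P` containing `v`. -/
def cliqueDeg {V : Type*} [DecidableEq V] (P : Finset (Finset V)) (v : V) : ℕ :=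
  (P.filter fun c => v ∈ c).card

/-- The maximum clique degree of `G` relative to `P`. -/
def maxCliqueDeg {V : Type*} [Fintype V] [DecidableEq V] (P : Finset (Finset V)) : ℕ :=
  Finset.univ.sup fun v => cliqueDeg P v

/-!
Let `N` be the vertex–clique incidence matrix of `P` and `D` the diagonal matrix of clique
degrees. Since every edge lies in exactly one clique, `A = N Nᵀ - D`, so for any vector `x`
`xᵀ A x + m ‖x‖² = ‖Nᵀ x‖² + ∑ᵥ (m - mᵥ) xᵥ²`, a sum of nonnegative terms.
For an eigenvector of `-m` the left side vanishes, which forces `Nᵀ x = 0` (condition (a)) and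
`xᵥ = 0` whenever `mᵥ < m` (condition (b)); conversely (a) and (b) turn `A x = N Nᵀ x - D x`
into `A x = -m x`.
-/

open Finset Matrix

section

variable {V : Type*}

namespace IsEdgeCliquePartition

variable {G : SimpleGraph V} {P : Finset (Finset V)}

theorem exists_mem_of_adj (hP : IsEdgeCliquePartition G P) {u v : V} (huv : G.Adj u v) :
    ∃ c ∈ P, u ∈ c ∧ v ∈ c := by
  obtain ⟨c, ⟨hc, hmem⟩, -⟩ := hP.2 _ (G.mem_edgeSet.2 huv)
  exact ⟨c, hc, hmem u (Sym2.mem_mk_left u v), hmem v (Sym2.mem_mk_right u v)⟩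

theorem eq_of_adj_mem (hP : IsEdgeCliquePartition G P) {u v : V} (huv : G.Adj u v)
    {c c' : Finset V} (hc : c ∈ P) (huc : u ∈ c) (hvc : v ∈ c)
    (hc' : c' ∈ P) (huc' : u ∈ c') (hvc' : v ∈ c') : c = c' := by
  obtain ⟨_, -, huniq⟩ := hP.2 _ (G.mem_edgeSet.2 huv)
  have hmem {c : Finset V} (hu : u ∈ c) (hv : v ∈ c) : ∀ w ∈ s(u, v), w ∈ c := by
    simp only [Sym2.mem_iff]
    rintro w (rfl | rfl) <;> assumption
  exact (huniq c ⟨hc, hmem huc hvc⟩).trans (huniq c' ⟨hc', hmem huc' hvc'⟩).symm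

variable [DecidableEq V]

theorem neighborFinset_eq_biUnion [Fintype V] [DecidableRel G.Adj]
    (hP : IsEdgeCliquePartition G P) (v : V) :
    G.neighborFinset v = {c ∈ P | v ∈ c}.biUnion (·.erase v) := by
  ext u
  simp only [SimpleGraph.mem_neighborFinset, mem_biUnion, mem_filter, mem_erase]
  constructor
  · intro hvu
    obtain ⟨c, hc, hvc, huc⟩ := hP.exists_mem_of_adj hvu
    exact ⟨c, ⟨hc, hvc⟩, hvu.ne', huc⟩
  · rintro ⟨c, ⟨hc, hvc⟩, huv, huc⟩
    exact (hP.1 c hc).1 hvc huc huv.symm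

theorem pairwiseDisjoint_erase (hP : IsEdgeCliquePartition G P) (v : V) :
    (({c ∈ P | v ∈ c} : Finset (Finset V)) : Set (Finset V)).PairwiseDisjoint (·.erase v) := by
  intro c hc c' hc' hne
  rw [mem_coe, mem_filter] at hc hc'
  refine disjoint_left.2 fun u hu hu' => hne ?_
  rw [mem_erase] at hu hu'
  exact hP.eq_of_adj_mem ((hP.1 c hc.1).1 hc.2 hu.2 hu.1.symm) hc.1 hc.2 hu.2 hc'.1 hc'.2 hu'.2

/-- The row form of `A = N Nᵀ - D`. -/
theorem adjMatrix_mulVec_apply [Fintype V] [DecidableRel G.Adj] (hP : IsEdgeCliquePartition G P)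
    (x : V → ℝ) (v : V) :
    (G.adjMatrix ℝ *ᵥ x) v = ∑ c ∈ P with v ∈ c, ∑ u ∈ c, x u - cliqueDeg P v * x v := by
  rw [SimpleGraph.adjMatrix_mulVec_apply, hP.neighborFinset_eq_biUnion,
    sum_biUnion (hP.pairwiseDisjoint_erase v),
    sum_congr rfl fun c hc => sum_erase_eq_sub (mem_filter.1 hc).2, sum_sub_distrib, sum_const,
    nsmul_eq_mul, cliqueDeg]

end IsEdgeCliquePartition

theorem cliqueDeg_le_maxCliqueDeg [Fintype V] [DecidableEq V] (P : Finset (Finset V)) (v : V) :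
    cliqueDeg P v ≤ maxCliqueDeg P :=
  le_sup (mem_univ v)

/-- The identity `‖Nᵀ x‖² = xᵀ (N Nᵀ x)`. -/
theorem sum_sq_sum_eq_sum_mul_sum_filter {R : Type*} [CommSemiring R] [Fintype V]
    [DecidableEq V] (P : Finset (Finset V)) (x : V → R) :
    ∑ c ∈ P, (∑ u ∈ c, x u) ^ 2 = ∑ v, x v * ∑ c ∈ P with v ∈ c, ∑ u ∈ c, x u := by
  simp_rw [sq, sum_mul, mul_sum]
  exact sum_comm' fun c v => by simp [and_comm]

theorem IsEdgeCliquePartition.adjMatrix_mulVec_eq_neg_maxCliqueDeg_smul_iff [Fintype V]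
    [DecidableEq V] {G : SimpleGraph V} [DecidableRel G.Adj] {P : Finset (Finset V)}
    (hP : IsEdgeCliquePartition G P) (x : V → ℝ) :
    G.adjMatrix ℝ *ᵥ x = (-(maxCliqueDeg P : ℝ)) • x ↔
      (∀ c ∈ P, ∑ v ∈ c, x v = 0) ∧ ∀ v, cliqueDeg P v ≠ maxCliqueDeg P → x v = 0 := by
  set m := maxCliqueDeg P
  have hgap (v : V) : (0 : ℝ) ≤ m - cliqueDeg P v :=
    sub_nonneg.2 (Nat.cast_le.2 (cliqueDeg_le_maxCliqueDeg P v))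
  constructor
  · intro h
    have hrow (v : V) : ∑ c ∈ P with v ∈ c, ∑ u ∈ c, x u = (cliqueDeg P v - m) * x v := by
      have := congrFun h v
      rw [hP.adjMatrix_mulVec_apply, Pi.smul_apply, smul_eq_mul] at this
      linarith
    have hsum : ∑ c ∈ P, (∑ u ∈ c, x u) ^ 2 + ∑ v, (m - cliqueDeg P v) * x v ^ 2 = 0 := by
      rw [sum_sq_sum_eq_sum_mul_sum_filter, ← sum_add_distrib]
      exact sum_eq_zero fun v _ => by rw [hrow]; ring
    obtain ⟨hcliques, hvertices⟩ := (add_eq_zero_iff_of_nonneg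
      (sum_nonneg fun c _ => sq_nonneg _)
      (sum_nonneg fun v _ => mul_nonneg (hgap v) (sq_nonneg _))).1 hsum
    refine ⟨fun c hc => ?_, fun v hv => ?_⟩
    · exact pow_eq_zero_iff two_ne_zero |>.1 <|
        (sum_eq_zero_iff_of_nonneg fun c _ => sq_nonneg _).1 hcliques c hc
    · have hpos : (0 : ℝ) < m - cliqueDeg P v :=
        sub_pos.2 (Nat.cast_lt.2 ((cliqueDeg_le_maxCliqueDeg P v).lt_of_ne hv))
      have := (sum_eq_zero_iff_of_nonneg fun v _ =>
        mul_nonneg (hgap v) (sq_nonneg (x v))).1 hvertices v (mem_univ v)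
      exact pow_eq_zero_iff two_ne_zero |>.1 <| (mul_eq_zero.1 this).resolve_left hpos.ne'
  · rintro ⟨hcliques, hvertices⟩
    funext v
    rw [hP.adjMatrix_mulVec_apply, sum_eq_zero fun c hc => hcliques c (mem_filter.1 hc).1,
      Pi.smul_apply, smul_eq_mul]
    by_cases hv : cliqueDeg P v = m
    · rw [hv]; ring
    · rw [hvertices v hv]; ring

end

/-- `-m` is an eigenvalue of the adjacency matrix of `G` iff there
is a nonzero vector `X` with (a) zero sum on every clique of `P` and
(b) vanishing at every vertex whose clique degree is not maximal; moreover a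
nonzero `X` is an eigenvector for `-m` exactly when (a) and (b) hold. -/
theorem neg_maxCliqueDeg_eigenvalue_iff {V : Type*} [Fintype V] [DecidableEq V]
    (G : SimpleGraph V) [DecidableRel G.Adj] (P : Finset (Finset V))
    (hP : IsEdgeCliquePartition G P) :
    ((∃ x : V → ℝ, x ≠ 0 ∧ (G.adjMatrix ℝ).mulVec x = (-(maxCliqueDeg P : ℝ)) • x) ↔
      (∃ x : V → ℝ, x ≠ 0 ∧ (∀ c ∈ P, ∑ v ∈ c, x v = 0) ∧
        ∀ v, cliqueDeg P v ≠ maxCliqueDeg P → x v = 0)) ∧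
    ∀ x : V → ℝ, x ≠ 0 →
      ((G.adjMatrix ℝ).mulVec x = (-(maxCliqueDeg P : ℝ)) • x ↔
        (∀ c ∈ P, ∑ v ∈ c, x v = 0) ∧
          ∀ v, cliqueDeg P v ≠ maxCliqueDeg P → x v = 0) := by
  have key := hP.adjMatrix_mulVec_eq_neg_maxCliqueDeg_smul_iff
  exact ⟨exists_congr fun x => and_congr_right fun _ => key x, fun x _ => key x⟩
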